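/- Every matrix of the form M(α,β) (upper triangular, diagonal entries α^{2^{i-1}}, last column entries β and a_{i,n}(α^{2^i} - α^{2^{n-1}}), α ≠ 0) with α > 0 over ℝ lies in the image of the matrix exponential of the derivation family d_{σ,τ}: there exist σ, τ ∈ ℝ with exp(d_{σ,τ}) = M(α,β). In particular, exp(Der(E)) = { M(α,β) : α > 0, β ∈ ℝ } when a_{ij} = 0 for i+1 < j < n. -/

import Mathlib

open Matrix

/-- The derivation matrix `d_{σ,τ}`: diagonal `(σ, 2σ, …, 2^n σ)`, last column
`(τ, (2-2^n)σ a_1, …, (2^{n-1}-2^n)σ a_{n-1}, 2^n σ)`, zeros elsewhere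
(dimension `n+1`, 0-based indices). -/
def derMat17 (n : ℕ) (a : Fin (n+1) → ℝ) (σ τ : ℝ) : Matrix (Fin (n+1)) (Fin (n+1)) ℝ :=
  Matrix.of fun i j : Fin (n+1) =>
    if i = j then (2 : ℝ) ^ (i : ℕ) * σ
    else if j = Fin.last n then
      (if i = 0 then τ else ((2 : ℝ) ^ (i : ℕ) - 2 ^ n) * σ * a i)
    else 0

/-- The automorphism matrix `M(α,β)`: diagonal `α^{2^i}`, `(0,n)` entry `β`,
`(i,n)` entries `a_i(α^{2^i} - α^{2^n})`, zeros elsewhere. -/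
def autoMat17 (n : ℕ) (a : Fin (n+1) → ℝ) (α β : ℝ) : Matrix (Fin (n+1)) (Fin (n+1)) ℝ :=
  Matrix.of fun i j : Fin (n+1) =>
    if i = j then α ^ (2 ^ (i : ℕ))
    else if j = Fin.last n then
      (if i = 0 then β else a i * (α ^ (2 ^ (i : ℕ)) - α ^ (2 ^ n)))
    else 0

/-!
Write `d_{σ,τ} = diag f + v e_nᵀ` with `f i = 2^i σ` and `v n = 0`. For `τ = (2^n - 1) σ c` one has
`v i = (f n - f i) u i` with `u = (c, -a_1, …, -a_{n-1}, 0)`, and this is exactly the conjugate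
`(1 + u e_nᵀ) diag f (1 + u e_nᵀ)⁻¹`, the inverse being `1 - u e_nᵀ` because `u n = 0`.
So `exp d_{σ,τ}` is the same conjugate of `diag (e^{f i})`, which is `M(e^σ, (e^{2^n σ} - e^σ) c)`.
For `σ = 0` the matrix `d_{0,τ}` squares to zero and `exp d_{0,τ} = 1 + d_{0,τ} = M(1, τ)`.
As `e^σ` runs over `(0, ∞)` and `(α^{2^n} - α) c` over `ℝ` when `α ≠ 1`, every `M(α, β)`, `α > 0`, is hit.
-/

theorem NormedSpace.exp_eq_one_add_of_mul_self_eq_zero {𝔸 : Type*} [Ring 𝔸] [Algebra ℚ 𝔸]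
    [TopologicalSpace 𝔸] [IsTopologicalRing 𝔸] {x : 𝔸} (hx : x * x = 0) :
    NormedSpace.exp x = 1 + x := by
  have hpow : ∀ k, 2 ≤ k → x ^ k = 0 := fun k hk => by
    obtain ⟨j, rfl⟩ := Nat.exists_eq_add_of_le hk
    rw [pow_add, sq, hx, zero_mul]
  rw [NormedSpace.exp_eq_tsum_rat]
  dsimp only
  rw [tsum_eq_sum (s := Finset.range 2)]
  · simp [Finset.sum_range_succ]
  · intro k hk
    rw [hpow k (by simp at hk; omega), smul_zero]

namespace Matrix

section ColumnMatrix

variable {m R : Type*} [DecidableEq m] [CommRing R] {ℓ : m}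

def colMat (ℓ : m) (u : m → R) : Matrix m m R :=
  vecMulVec u (Pi.single ℓ 1)

theorem colMat_apply (u : m → R) (i j : m) :
    colMat ℓ u i j = if j = ℓ then u i else 0 := by
  by_cases h : j = ℓ <;> simp [colMat, vecMulVec_apply, h]

variable [Fintype m]

theorem colMat_mul_colMat (u : m → R) {v : m → R} (hv : v ℓ = 0) :
    colMat ℓ u * colMat ℓ v = 0 := by
  ext i j
  simp [mul_apply, colMat_apply, Finset.sum_ite_eq', hv]

theorem diagonal_mul_colMat (f u : m → R) :
    diagonal f * colMat ℓ u = colMat ℓ (fun i => f i * u i) := by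
  ext i j
  simp [diagonal_mul, colMat_apply]

theorem colMat_mul_diagonal (f u : m → R) :
    colMat ℓ u * diagonal f = colMat ℓ (fun i => f ℓ * u i) := by
  ext i j
  by_cases hj : j = ℓ <;> simp [mul_diagonal, colMat_apply, hj, mul_comm]

theorem one_add_colMat_mul_one_sub_colMat {u : m → R} (hu : u ℓ = 0) :
    (1 + colMat ℓ u) * (1 - colMat ℓ u) = 1 := by
  noncomm_ring
  simp [colMat_mul_colMat u hu]

theorem one_sub_colMat_mul_one_add_colMat {u : m → R} (hu : u ℓ = 0) :
    (1 - colMat ℓ u) * (1 + colMat ℓ u) = 1 := by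
  noncomm_ring
  simp [colMat_mul_colMat u hu]

theorem one_add_colMat_mul_diagonal_mul_one_sub_colMat (f : m → R) {u : m → R} (hu : u ℓ = 0) :
    (1 + colMat ℓ u) * diagonal f * (1 - colMat ℓ u)
      = diagonal f + colMat ℓ (fun i => (f ℓ - f i) * u i) := by
  have hcross : colMat ℓ u * diagonal f * colMat ℓ u = 0 := by
    rw [colMat_mul_diagonal, colMat_mul_colMat _ hu]
  calc (1 + colMat ℓ u) * diagonal f * (1 - colMat ℓ u)
      = diagonal f + colMat ℓ u * diagonal f - diagonal f * colMat ℓ u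
          - colMat ℓ u * diagonal f * colMat ℓ u := by noncomm_ring
    _ = diagonal f + colMat ℓ (fun i => (f ℓ - f i) * u i) := by
      rw [hcross, colMat_mul_diagonal, diagonal_mul_colMat]
      ext i j
      by_cases hj : j = ℓ <;> simp [colMat_apply, hj]; ring

end ColumnMatrix

theorem exp_diagonal_add_colMat {m : Type*} [Fintype m] [DecidableEq m] {ℓ : m}
    (f : m → ℝ) {u : m → ℝ} (hu : u ℓ = 0) :
    NormedSpace.exp (diagonal f + colMat ℓ (fun i => (f ℓ - f i) * u i))
      = diagonal (fun i => Real.exp (f i))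
        + colMat ℓ (fun i => (Real.exp (f ℓ) - Real.exp (f i)) * u i) := by
  let U : (Matrix m m ℝ)ˣ := ⟨1 + colMat ℓ u, 1 - colMat ℓ u,
    one_add_colMat_mul_one_sub_colMat hu, one_sub_colMat_mul_one_add_colMat hu⟩
  have hexp : NormedSpace.exp f = fun i => Real.exp (f i) := by
    funext i
    rw [Pi.coe_exp, Real.exp_eq_exp_ℝ]
  rw [← one_add_colMat_mul_diagonal_mul_one_sub_colMat f hu,
    ← one_add_colMat_mul_diagonal_mul_one_sub_colMat _ hu]
  have hconj := exp_units_conj U (diagonal f)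
  rwa [exp_diagonal, hexp] at hconj

end Matrix

section DerivationMatrices

variable {n : ℕ} (a : Fin (n+1) → ℝ)

def shearCol (c : ℝ) : Fin (n+1) → ℝ :=
  fun i => if i = Fin.last n then 0 else if i = 0 then c else -a i

theorem shearCol_last (c : ℝ) : shearCol a c (Fin.last n) = 0 := by
  simp [shearCol]

-- `shearCol 0 τ` is the vector `τ e_0` with its last entry forced to vanish.
theorem derMat17_zero (τ : ℝ) : derMat17 n a 0 τ = colMat (Fin.last n) (shearCol 0 τ) := by
  ext i j
  simp only [derMat17, of_apply, colMat_apply, shearCol]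
  split_ifs <;> simp_all

theorem autoMat17_one (τ : ℝ) : autoMat17 n a 1 τ = 1 + colMat (Fin.last n) (shearCol 0 τ) := by
  ext i j
  simp only [autoMat17, of_apply, Matrix.add_apply, one_apply, colMat_apply, shearCol]
  split_ifs <;> simp_all

theorem exp_derMat17_zero (τ : ℝ) : NormedSpace.exp (derMat17 n a 0 τ) = autoMat17 n a 1 τ := by
  rw [derMat17_zero, autoMat17_one,
    NormedSpace.exp_eq_one_add_of_mul_self_eq_zero (colMat_mul_colMat _ (shearCol_last 0 τ))]

theorem exp_derMat17 (σ c : ℝ) :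
    NormedSpace.exp (derMat17 n a σ ((2 ^ n - 1) * σ * c))
      = autoMat17 n a (Real.exp σ) ((Real.exp σ ^ 2 ^ n - Real.exp σ) * c) := by
  set f : Fin (n+1) → ℝ := fun i => 2 ^ (i : ℕ) * σ with hf
  have hder : derMat17 n a σ ((2 ^ n - 1) * σ * c)
      = diagonal f + colMat (Fin.last n) (fun i => (f (Fin.last n) - f i) * shearCol a c i) := by
    ext i j
    simp only [derMat17, of_apply, Matrix.add_apply, diagonal_apply, colMat_apply, shearCol, hf]
    split_ifs <;> simp_all [sub_mul]
  have hexp : ∀ k : ℕ, Real.exp (2 ^ k * σ) = Real.exp σ ^ 2 ^ k := fun k => by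
    rw [← Real.exp_nat_mul]; push_cast; rfl
  rw [hder, exp_diagonal_add_colMat f (shearCol_last a c)]
  ext i j
  simp only [autoMat17, of_apply, Matrix.add_apply, diagonal_apply, colMat_apply, shearCol, hf, hexp]
  split_ifs <;> simp_all [mul_sub, mul_comm, neg_add_eq_sub]

end DerivationMatrices

theorem pow_two_pow_sub_self_ne_zero {K : Type*} [Field K] [LinearOrder K] [IsStrictOrderedRing K]
    {n : ℕ} (hn : 0 < n) {α : K} (h0 : 0 < α) (h1 : α ≠ 1) : α ^ 2 ^ n - α ≠ 0 := by
  refine sub_ne_zero.2 fun h => (Nat.one_lt_two_pow hn.ne').ne' ?_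
  exact pow_right_injective₀ h0 h1 (h.trans (pow_one α).symm)

section ExpImage

variable {n : ℕ} (a : Fin (n+1) → ℝ)

theorem exists_exp_derMat17_eq (hn : 0 < n) (σ τ : ℝ) :
    ∃ β, NormedSpace.exp (derMat17 n a σ τ) = autoMat17 n a (Real.exp σ) β := by
  rcases eq_or_ne σ 0 with rfl | hσ
  · exact ⟨τ, by rw [exp_derMat17_zero, Real.exp_zero]⟩
  · have h2n : (2 : ℝ) ^ n - 1 ≠ 0 := sub_ne_zero.2 (one_lt_pow₀ one_lt_two hn.ne').ne'
    have hτ : τ = (2 ^ n - 1) * σ * (τ / ((2 ^ n - 1) * σ)) := by field_simp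
    exact ⟨_, by rw [hτ, exp_derMat17]⟩

theorem exists_exp_derMat17_eq_autoMat17 (hn : 0 < n) {α : ℝ} (hα : 0 < α) (β : ℝ) :
    ∃ σ τ, NormedSpace.exp (derMat17 n a σ τ) = autoMat17 n a α β := by
  rcases eq_or_ne α 1 with rfl | hα1
  · exact ⟨0, β, exp_derMat17_zero a β⟩
  · refine ⟨Real.log α, (2 ^ n - 1) * Real.log α * (β / (α ^ 2 ^ n - α)), ?_⟩
    rw [exp_derMat17, Real.exp_log hα, mul_div_cancel₀ _ (pow_two_pow_sub_self_ne_zero hn hα hα1)]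

end ExpImage

/-- every `M(α,β)` with `α > 0` is the exponential of some derivation
`d_{σ,τ}`; hence `exp(Der E) = {M(α,β) : α > 0}`. -/
theorem exp_der_image {n : ℕ} (hn : 2 ≤ n) (a : Fin (n+1) → ℝ) :
    (∀ α β : ℝ, 0 < α → ∃ σ τ : ℝ, NormedSpace.exp (derMat17 n a σ τ) = autoMat17 n a α β) ∧
    {X : Matrix (Fin (n+1)) (Fin (n+1)) ℝ | ∃ σ τ : ℝ, X = NormedSpace.exp (derMat17 n a σ τ)}
      = {X | ∃ α β : ℝ, 0 < α ∧ X = autoMat17 n a α β} := by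
  have hn0 : 0 < n := by omega
  refine ⟨fun α β hα => exists_exp_derMat17_eq_autoMat17 a hn0 hα β, ?_⟩
  ext X
  constructor
  · rintro ⟨σ, τ, rfl⟩
    obtain ⟨β, hβ⟩ := exists_exp_derMat17_eq a hn0 σ τ
    exact ⟨Real.exp σ, β, Real.exp_pos σ, hβ⟩
  · rintro ⟨α, β, hα, rfl⟩
    obtain ⟨σ, τ, h⟩ := exists_exp_derMat17_eq_autoMat17 a hn0 hα β
    exact ⟨σ, τ, h.symm⟩
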